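/- arXiv:1601.04506 — 2 statements merged into one kernel-verified Lean document; each statement's English description precedes it below -/
import Mathlib

section
/- In the gauge where U is unit timelike, U = e₀, and the 1-form f arises from a conformal geodesic congruence with f_μ = b_μ − Ω^{-1}∇_μΩ, b_μ = −ω∇_V ω ĝ_{μν}V^ν, θ = ω/Ω, and ∇_U θ = θ⟨U,f⟩, one obtains the regularizing relation ∇_μ Ω = −(∇_U Ω + Ω⟨U,f⟩) U_μ − Ω f_μ. -/
/-! Since ω = θΩ, the coefficient of U_μ in b_μ is minus the logarithmic derivative of ω along
the flow, which splits as ∇_U log θ + ∇_U log Ω = ⟨U,f⟩ + Ω⁻¹∇_UΩ. Solving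
f_μ = b_μ − Ω⁻¹∇_μΩ for ∇_μΩ then gives the relation. -/

theorem logDeriv_eq_add_of_eq_mul {𝕜 𝕜' : Type*} [NontriviallyNormedField 𝕜]
    [NontriviallyNormedField 𝕜'] [NormedAlgebra 𝕜 𝕜'] {h f g : 𝕜 → 𝕜'} {x : 𝕜}
    (hfg : ∀ z, h z = f z * g z) (hf : f x ≠ 0) (hg : g x ≠ 0)
    (hdf : DifferentiableAt 𝕜 f x) (hdg : DifferentiableAt 𝕜 g x) :
    logDeriv h x = logDeriv f x + logDeriv g x := by
  rw [funext hfg]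
  exact logDeriv_mul x hf hg hdf hdg

theorem stmt3_general
    (E : Type*)
    (Ω ω θ : ℝ → ℝ) (τ : ℝ)
    (hΩd : DifferentiableAt ℝ Ω τ) (hθd : DifferentiableAt ℝ θ τ)
    (hΩpos : ∀ s, 0 < Ω s) (hθpos : ∀ s, 0 < θ s)
    (hω : ∀ s, ω s = θ s * Ω s)
    (U dΩ b f : E → ℝ)  -- the covectors U_μ, ∇_μΩ, b_μ, f_μ at x(τ)
    (Uvec : E)          -- the vector U^μ at x(τ)
    (hb : ∀ X, b X = -(ω τ) * ((θ τ)⁻¹ * deriv ω τ) * ((ω τ)⁻¹ * (Ω τ)⁻¹ * U X))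
    (hf : ∀ X, f X = b X - (Ω τ)⁻¹ * dΩ X)
    (hθode : deriv θ τ = θ τ * f Uvec) :
    ∀ X, dΩ X = -(deriv Ω τ + Ω τ * f Uvec) * U X - Ω τ * f X := by
  intro X
  have hΩ0 : Ω τ ≠ 0 := (hΩpos τ).ne'
  have hθ0 : θ τ ≠ 0 := (hθpos τ).ne'
  have hlogω : logDeriv ω τ = f Uvec + deriv Ω τ / Ω τ := by
    rw [logDeriv_eq_add_of_eq_mul hω hθ0 hΩ0 hθd hΩd, logDeriv_apply, logDeriv_apply, hθode,
      mul_div_cancel_left₀ _ hθ0]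
  have hbX : b X = -logDeriv ω τ * U X := by
    rw [hb X, logDeriv_apply, hω τ]
    field_simp
  have hdΩ : dΩ X = Ω τ * (b X - f X) := by
    rw [hf X]
    field_simp
    ring
  rw [hdΩ, hbX, hlogω]
  field_simp
  ring

/-- the regularizing relation.  Along the flow line x(τ) of the unit
timelike field U = e₀ (with ∇_U of a scalar equal to the τ-derivative), with
θ = ω/Ω (encoded as ω = θΩ), b_μ = −ω ∇_V ω ĝ_{μν}V^ν where ∇_V = θ⁻¹∇_U and
ĝ_{μν}V^ν = ω⁻¹Ω⁻¹U_μ (hypothesis `hb`), f_μ = b_μ − Ω⁻¹∇_μΩ (hypothesis `hf`),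
and ∇_U θ = θ⟨U,f⟩ (hypothesis `hθode`), one obtains
∇_μΩ = −(∇_UΩ + Ω⟨U,f⟩)U_μ − Ω f_μ. -/
theorem stmt3
    (E : Type*) [AddCommGroup E] [Module ℝ E]
    (Ω ω θ : ℝ → ℝ) (τ : ℝ)
    (hΩd : DifferentiableAt ℝ Ω τ) (hθd : DifferentiableAt ℝ θ τ)
    (hΩpos : ∀ s, 0 < Ω s) (hθpos : ∀ s, 0 < θ s)
    (hω : ∀ s, ω s = θ s * Ω s)
    (U dΩ b f : E → ℝ)  -- the covectors U_μ, ∇_μΩ, b_μ, f_μ at x(τ)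
    (Uvec : E)          -- the vector U^μ at x(τ)
    (hb : ∀ X, b X = -(ω τ) * ((θ τ)⁻¹ * deriv ω τ) * ((ω τ)⁻¹ * (Ω τ)⁻¹ * U X))
    (hf : ∀ X, f X = b X - (Ω τ)⁻¹ * dΩ X)
    (hθode : deriv θ τ = θ τ * f Uvec) :
    ∀ X, dΩ X = -(deriv Ω τ + Ω τ * f Uvec) * U X - Ω τ * f X :=
  stmt3_general E Ω ω θ τ hΩd hθd hΩpos hθpos hω U dΩ b f Uvec hb hf hθode
end

section
/- Let F_{jkl} be a tensor in a 4-dimensional Lorentzian space with F_{jkl} = −F_{jlk}, F_{[jkl]} = 0, and F^j{}_{jl} = 0, and let U be a unit timelike vector with spatial projector h^j_k = g^j_k + U^jU_k. Define P_a = F_{0a0}, Q_b = −½ F_{0cd} ε_b{}^{cd}, P_{ab} = −F_{(a|0|b)}, Q_{ab} = −½ F_{(a}{}^{cd} ε_{b)cd} (in a frame with e₀ = U). If P_{ab} = 0 and Q_{ab} = 0, then F_{jkl} = 3 U_j P_{[k} U_{l]} − g_{j[k} P_{l]} + Q_i (U_j ε^i{}_{kl} − ε^i{}_{j[k} U_{l]}).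 -/
/-!
In the frame `e₀ = U` the hypotheses pin down every component of `F`. The time row `F_{0cd}`
is the spatial dual of `Q`; the cyclic identity together with `P_{(ab)} = 0` gives
`F_{a0b} = ½ F_{0ab}`; on the spatial part, `Q_{ab} = 0` says that the dual
`½ F_{acd} ε_{bcd}` is antisymmetric, so `F_{abc} = δ_{ab} v_c - δ_{ac} v_b` for some `v`,
and the trace condition identifies `v = -½ P`.
-/

/-- The Levi-Civita symbol ε_{ijkl} on Fin 4 with ε_{0123} = 1. -/
noncomputable def eps4 (i j k l : Fin 4) : ℝ :=
  Matrix.det (Matrix.of ![Pi.single i (1:ℝ), Pi.single j 1, Pi.single k 1, Pi.single l 1])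

lemma eps4_zero_eq_ite (b c d : Fin 4) : eps4 0 b c d =
    if b = 1 ∧ c = 2 ∧ d = 3 ∨ b = 2 ∧ c = 3 ∧ d = 1 ∨ b = 3 ∧ c = 1 ∧ d = 2 then 1
    else if b = 1 ∧ c = 3 ∧ d = 2 ∨ b = 3 ∧ c = 2 ∧ d = 1 ∨ b = 2 ∧ c = 1 ∧ d = 3 then -1
    else 0 := by
  rw [eps4, Matrix.det_succ_row_zero, Fin.sum_univ_four]
  simp only [Matrix.det_fin_three, Matrix.submatrix_apply, Matrix.of_apply]
  fin_cases b <;> fin_cases c <;> fin_cases d <;> simp [Fin.succAbove]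

lemma sum_sum_mul_eps4_zero (T : Fin 4 → Fin 4 → ℝ) (b : Fin 4) :
    ∑ c, ∑ d, T c d * eps4 0 b c d = ![0, T 2 3 - T 3 2, T 3 1 - T 1 3, T 1 2 - T 2 1] b := by
  fin_cases b <;> simp [Fin.sum_univ_four, eps4_zero_eq_ite, sub_eq_add_neg, add_comm]

section

variable {F : Fin 4 → Fin 4 → Fin 4 → ℝ}

lemma Q_eq_neg_F_zero (hanti : ∀ j k l, F j k l = -F j l k) {Q : Fin 4 → ℝ}
    (hQ : ∀ b, Q b = -(1/2) * ∑ c, ∑ d, F 0 c d * eps4 0 b c d) :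
    Q 0 = 0 ∧ Q 1 = -F 0 2 3 ∧ Q 2 = -F 0 3 1 ∧ Q 3 = -F 0 1 2 := by
  simp [hQ, sum_sum_mul_eps4_zero, hanti 0 3 2, hanti 0 1 3, hanti 0 2 1, ← two_mul]

lemma two_mul_F_spatial_zero_spatial (hanti : ∀ j k l, F j k l = -F j l k)
    (hcyc : ∀ j k l, F j k l + F k l j + F l j k = 0)
    (hPab : ∀ a b, a ≠ 0 → b ≠ 0 → F a 0 b + F b 0 a = 0) {a b : Fin 4} (ha : a ≠ 0)
    (hb : b ≠ 0) : 2 * F a 0 b = F 0 a b := by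
  linarith [hcyc a 0 b, hanti b a 0, hanti 0 b a, hPab a b ha hb]

lemma F_spatial_eq (hanti : ∀ j k l, F j k l = -F j l k)
    (htrace : ∀ l, ∑ j, (if j = 0 then -1 else 1) * F j j l = 0)
    {P : Fin 4 → ℝ} (hP : ∀ a, P a = F 0 a 0)
    (hQab : ∀ a b, a ≠ 0 → b ≠ 0 →
      (∑ c, ∑ d, F a c d * eps4 0 b c d) + (∑ c, ∑ d, F b c d * eps4 0 a c d) = 0) :
    F 1 2 3 = 0 ∧ F 2 3 1 = 0 ∧ F 3 1 2 = 0 ∧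
    F 2 1 2 = P 1 / 2 ∧ F 3 1 3 = P 1 / 2 ∧ F 1 1 2 = -(P 2 / 2) ∧ F 3 2 3 = P 2 / 2 ∧
    F 1 1 3 = -(P 3 / 2) ∧ F 2 2 3 = -(P 3 / 2) := by
  simp only [sum_sum_mul_eps4_zero] at hQab
  have q11 := hQab 1 1 (by decide) (by decide)
  have q22 := hQab 2 2 (by decide) (by decide)
  have q33 := hQab 3 3 (by decide) (by decide)
  have q12 := hQab 1 2 (by decide) (by decide)
  have q13 := hQab 1 3 (by decide) (by decide)
  have q23 := hQab 2 3 (by decide) (by decide)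
  have t1 := htrace 1
  have t2 := htrace 2
  have t3 := htrace 3
  have hdiag (j k : Fin 4) : F j k k = 0 := by linarith [hanti j k k]
  have hP' (l : Fin 4) : F 0 0 l = -P l := by rw [hP, hanti]
  simp only [Matrix.cons_val_zero, Matrix.cons_val_one, Matrix.cons_val, add_self_eq_zero,
    ite_mul, neg_mul, one_mul, Fin.sum_univ_four, ↓reduceIte, hP', neg_neg, hdiag, add_zero,
    Fin.reduceEq, one_ne_zero, Fin.isValue] at q11 q22 q33 q12 q13 q23 t1 t2 t3
  -- `q11, q22, q33` kill `F_{123}, F_{231}, F_{312}`; e.g. `q23` says `F_{212} = F_{313}`, and `t1`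
  -- fixes their sum.
  refine ⟨?_, ?_, ?_, ?_, ?_, ?_, ?_, ?_, ?_⟩ <;>
    linarith [hanti 1 3 2, hanti 2 1 3, hanti 3 2 1, hanti 1 2 1, hanti 1 3 1, hanti 2 2 1,
      hanti 2 3 2, hanti 3 3 1, hanti 3 3 2]

end

/-- in a frame with e₀ = U (so U^j = δ^j₀, U_j = −δ_{j0}, encoded by
`Uc`), let F_{jkl} be antisymmetric in its last two indices, with F_{[jkl]} = 0 and
F^j{}_{jl} = 0.  The spatial volume form is ε_{bcd} = ε_{0bcd} (eps4 0 b c d).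
Set P_a = F_{0a0}, Q_b = −½F_{0cd}ε_b{}^{cd}; if the symmetrized evolution parts
P_{ab} = −F_{(a|0|b)} and Q_{ab} = −½F_{(a}{}^{cd}ε_{b)cd} vanish, then
F_{jkl} = 3U_jP_{[k}U_{l]} − g_{j[k}P_{l]} + Q_i(U_jε^i{}_{kl} − ε^i{}_{j[k}U_{l]}). -/
theorem stmt16 (eta : Fin 4 → ℝ) (heta : eta = fun i => if i = 0 then -1 else 1)
    (etam : Fin 4 → Fin 4 → ℝ) (hetam : ∀ i j, etam i j = if i = j then eta i else 0)
    (Uc : Fin 4 → ℝ) (hUc : Uc = fun j => if j = 0 then -1 else 0)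
    (F : Fin 4 → Fin 4 → Fin 4 → ℝ)
    (hanti : ∀ j k l, F j k l = -F j l k)
    (hcyc : ∀ j k l, F j k l + F k l j + F l j k = 0)
    (htrace : ∀ l, ∑ j, eta j * F j j l = 0)
    (P Q : Fin 4 → ℝ)
    (hP : ∀ a, P a = F 0 a 0)
    (hQ : ∀ b, Q b = -(1/2) * ∑ c, ∑ d, F 0 c d * eps4 0 b c d)
    (hPab : ∀ a b, a ≠ 0 → b ≠ 0 → F a 0 b + F b 0 a = 0)
    (hQab : ∀ a b, a ≠ 0 → b ≠ 0 →
      (∑ c, ∑ d, F a c d * eps4 0 b c d) + (∑ c, ∑ d, F b c d * eps4 0 a c d) = 0) :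
    ∀ j k l, F j k l
      = (3/2) * Uc j * (P k * Uc l - P l * Uc k)
        - (1/2) * (etam j k * P l - etam j l * P k)
        + ∑ i, Q i * (Uc j * eps4 0 i k l
            - (1/2) * (eps4 0 i j k * Uc l - eps4 0 i j l * Uc k)) := by
  subst heta hUc
  obtain ⟨hQ0, hQ1, hQ2, hQ3⟩ := Q_eq_neg_F_zero hanti hQ
  obtain ⟨h123, h231, h312, h212, h313, h112, h323, h113, h223⟩ :=
    F_spatial_eq hanti htrace hP hQab
  have hP0 : P 0 = 0 := by linarith [hP 0, hanti 0 0 0]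
  intro j k l
  -- the instances that bring `F j k l` to one of the components computed above
  have hjkl := hanti j k l
  have h0jk := hanti 0 j k
  have h0jl := hanti 0 j l
  have h0kl := hanti 0 k l
  have hjk := two_mul_F_spatial_zero_spatial (a := j) (b := k) hanti hcyc hPab
  have hjl := two_mul_F_spatial_zero_spatial (a := j) (b := l) hanti hcyc hPab
  have hPk := hP k
  have hPl := hP l
  fin_cases j <;> fin_cases k <;> fin_cases l <;>
    simp [hetam, eps4_zero_eq_ite] at hjkl h0jk h0jl h0kl hjk hjl hPk hPl ⊢ <;> linarith
end
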